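/- Let R be a Noetherian ring and M a finite R-module satisfying Serre's condition S2. Let p ∈ Supp M be a prime with dim M_p ≥ 2 (i.e., p has codimension ≥ 2 in Supp M). Then for every prime q ⊆ p that is minimal in Supp M, the height of p/q in R/q is ≥ 2. In other words, the support of a finite S2 module satisfies codimension-1 purity: a point of codimension 1 in some irreducible component of the support has codimension 1 in the support. -/

import Mathlib

universe u

/-- `depthGE R J M n` : there is a weakly regular sequence on `M` of length `n` with entries
in `J`.  For a Noetherian local ring `R` and a finite module `M` with `J • M ≠ M` this says
exactly `depth_J M ≥ n` (and the zero module has depth `+∞`, so `depthGE` always holds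
for it, matching the usual convention). -/
def depthGE (R : Type u) [CommRing R] (J : Ideal R)
    (M : Type u) [AddCommGroup M] [Module R M] (n : ℕ) : Prop :=
  ∃ rs : List R, rs.length = n ∧ (∀ r ∈ rs, r ∈ J) ∧
    RingTheory.Sequence.IsWeaklyRegular M rs

/-- The (Krull) dimension of a module: `dim (R / ann M)`. -/
noncomputable def moduleKrullDim (R : Type u) [CommRing R]
    (M : Type u) [AddCommGroup M] [Module R M] : WithBot ℕ∞ :=
  ringKrullDim (R ⧸ Module.annihilator R M)

/-- Serre's condition `S2` for a finite module over a Noetherian ring: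
`depth_{R_p} M_p ≥ min (2, dim M_p)` for every prime `p` in the support of `M`. -/
def IsS2 (R : Type u) [CommRing R] (M : Type u) [AddCommGroup M] [Module R M] : Prop :=
  ∀ p ∈ Module.support R M, ∀ n : ℕ,
    (n : WithBot ℕ∞) ≤ min 2 (moduleKrullDim (Localization.AtPrime p.asIdeal)
        (LocalizedModule p.asIdeal.primeCompl M)) →
      depthGE (Localization.AtPrime p.asIdeal)
        (IsLocalRing.maximalIdeal (Localization.AtPrime p.asIdeal))
        (LocalizedModule p.asIdeal.primeCompl M) n

/-!
Localize at `p`. Minimal primes of the support are associated primes, so `q` becomes an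
associated prime `Q` of `N = M_p`, and `S2` gives an `N`-regular sequence `a, b` in the maximal
ideal `𝔪` of `R_p`. By Nakayama some nonzero element of `N` killed by `Q` survives in `N/aN`,
so `Q + (a)` lies in an associated prime `P` of `N/aN`. Regular elements avoid associated
primes, hence `a ∉ Q` and `b ∉ P`, i.e. `Q < P < 𝔪`; contracting to `R` gives a chain
`q < r < p` of primes, which shows that `p/q` has height at least `2`.
-/

open Pointwise IsLocalRing Submodule

section

variable {R M : Type*} [CommRing R] [AddCommGroup M] [Module R M]

lemma IsSMulRegular.notMem_of_mem_associatedPrimes [IsNoetherianRing R] {a : R}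
    (ha : IsSMulRegular M a) {P : Ideal R} (hP : P ∈ associatedPrimes R M) : a ∉ P := by
  intro haP
  have h : a ∈ ⋃ P ∈ associatedPrimes R M, (P : Set R) := Set.mem_biUnion hP haP
  rw [biUnion_associatedPrimes_eq_compl_regular] at h
  exact h ha

lemma exists_mem_torsionBySet_notMem_smul_top [IsNoetherian R M] {I : Ideal R} {a : R}
    (ha : IsSMulRegular M a) (haJ : a ∈ (⊥ : Ideal R).jacobson)
    (hI : torsionBySet R M I ≠ ⊥) :
    ∃ x ∈ torsionBySet R M I, x ∉ a • (⊤ : Submodule R M) := by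
  -- If `T ≤ a • ⊤` then `T ≤ a • T`, as `a` is regular, and Nakayama forces `T = ⊥`.
  by_contra! h
  refine hI (eq_bot_of_le_smul_of_le_jacobson_bot (Ideal.span {a}) _
    (IsNoetherian.noetherian _) (fun x hx ↦ ?_) (Ideal.span_le.mpr (by simpa using haJ)))
  obtain ⟨y, -, rfl⟩ := (mem_smul_pointwise_iff_exists _ _ _).mp (h x hx)
  have hy : y ∈ torsionBySet R M I := (mem_torsionBySet_iff _ _).mpr fun i ↦
    ha (show a • ((i : R) • y) = a • 0 by
      rw [smul_zero, smul_comm]; exact (mem_torsionBySet_iff _ _).mp hx i)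
  exact smul_mem_smul (Ideal.mem_span_singleton_self a) hy

lemma exists_le_mem_associatedPrimes_quotSMulTop [IsNoetherianRing R] [Module.Finite R M]
    {Q : Ideal R} (hQ : Q ∈ associatedPrimes R M) {a : R} (ha : IsSMulRegular M a)
    (haJ : a ∈ (⊥ : Ideal R).jacobson) :
    ∃ P ∈ associatedPrimes R (QuotSMulTop a M), Q ≤ P := by
  obtain ⟨hQp, x, rfl⟩ := isAssociatedPrime_iff.mp hQ
  have hx : x ∈ torsionBySet R M ((⊥ : Submodule R M).colon {x}) :=
    (mem_torsionBySet_iff _ _).mpr fun i ↦ mem_colon_singleton.mp i.2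
  have hx0 : x ≠ 0 := by rintro rfl; exact hQp.ne_top (by ext; simp [mem_colon_singleton])
  obtain ⟨y, hy, hya⟩ := exists_mem_torsionBySet_notMem_smul_top ha haJ
    ((Submodule.ne_bot_iff _).mpr ⟨x, hx, hx0⟩)
  have hy0 : (Submodule.Quotient.mk y : QuotSMulTop a M) ≠ 0 := by
    rwa [ne_eq, Submodule.Quotient.mk_eq_zero]
  obtain ⟨P, hP, hle⟩ := exists_le_isAssociatedPrime_of_isNoetherianRing R _ hy0
  refine ⟨P, hP, fun r hr ↦ hle ?_⟩
  rw [mem_colon_singleton, mem_bot, ← Submodule.Quotient.mk_smul,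
    (mem_torsionBySet_iff _ _).mp hy ⟨r, hr⟩, Submodule.Quotient.mk_zero]

theorem exists_isPrime_between_of_isWeaklyRegular {S N : Type*} [CommRing S]
    [IsNoetherianRing S] [IsLocalRing S] [AddCommGroup N] [Module S N] [Module.Finite S N]
    {Q : Ideal S} (hQ : Q ∈ associatedPrimes S N) {a b : S}
    (ha : a ∈ maximalIdeal S) (hb : b ∈ maximalIdeal S)
    (hreg : RingTheory.Sequence.IsWeaklyRegular N [a, b]) :
    ∃ P : Ideal S, P.IsPrime ∧ Q < P ∧ P < maximalIdeal S := by
  simp only [RingTheory.Sequence.isWeaklyRegular_cons_iff] at hreg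
  obtain ⟨hra, hrb, -⟩ := hreg
  obtain ⟨P, hP, hQP⟩ := exists_le_mem_associatedPrimes_quotSMulTop hQ hra
    (by rwa [IsLocalRing.jacobson_eq_maximalIdeal ⊥ bot_ne_top])
  have haP : a ∈ P := IsAssociatedPrime.annihilator_le hP
    (by rw [annihilator_top]; exact QuotSMulTop.mem_annihilator (M := N) a)
  refine ⟨P, hP.isPrime, lt_of_le_of_ne' hQP fun h ↦ ?_,
    lt_of_le_of_ne' (le_maximalIdeal hP.isPrime.ne_top) fun h ↦ ?_⟩
  · exact hra.notMem_of_mem_associatedPrimes hQ (h ▸ haP)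
  · exact hrb.notMem_of_mem_associatedPrimes hP (h ▸ hb)

lemma mem_minimalPrimes_annihilator_of_minimal_support [Module.Finite R M]
    {q : PrimeSpectrum R} (hq : q ∈ Module.support R M)
    (hmin : ∀ r ∈ Module.support R M, r.asIdeal ≤ q.asIdeal → r.asIdeal = q.asIdeal) :
    q.asIdeal ∈ (Module.annihilator R M).minimalPrimes := by
  refine ⟨⟨q.2, Module.mem_support_iff_of_finite.mp hq⟩, fun r ⟨hr, hann⟩ hrq ↦ ?_⟩
  exact (hmin ⟨r, hr⟩ (Module.mem_support_iff_of_finite.mpr hann) hrq).ge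

lemma Ideal.map_quotientMk_lt_map_quotientMk {I J K : Ideal R} (hIJ : I ≤ J) (hJK : J < K) :
    J.map (Ideal.Quotient.mk I) < K.map (Ideal.Quotient.mk I) :=
  lt_of_le_of_ne (Ideal.map_mono hJK.le) fun h ↦ hJK.ne <| by
    rw [← Ideal.comap_map_mk hIJ, h, Ideal.comap_map_mk (hIJ.trans hJK.le)]

lemma Order.two_le_height_of_lt_of_lt {α : Type*} [Preorder α] {a b c : α} (hab : a < b)
    (hbc : b < c) : 2 ≤ Order.height c :=
  (ENat.add_one_le_iff ENat.one_ne_top).mpr (Order.one_lt_height_iff.mpr ⟨b, a, hab, hbc⟩)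

lemma two_le_height_map_quotientMk_of_lt_of_lt {q r p : Ideal R} [q.IsPrime] [r.IsPrime]
    (hqr : q < r) (hrp : r < p) (hp : (p.map (Ideal.Quotient.mk q)).IsPrime) :
    2 ≤ Order.height (⟨p.map (Ideal.Quotient.mk q), hp⟩ : PrimeSpectrum (R ⧸ q)) :=
  Order.two_le_height_of_lt_of_lt
    (a := ⟨q.map (Ideal.Quotient.mk q), Ideal.isPrime_map_quotientMk_of_isPrime le_rfl⟩)
    (b := ⟨r.map (Ideal.Quotient.mk q), Ideal.isPrime_map_quotientMk_of_isPrime hqr.le⟩)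
    (Ideal.map_quotientMk_lt_map_quotientMk le_rfl hqr)
    (Ideal.map_quotientMk_lt_map_quotientMk hqr.le hrp)

end

/-- **Codimension-1 purity of the support of an `S2` module.**
Let `R` be a Noetherian ring and `M` a finite `R`-module satisfying Serre's condition `S2`.
Let `p ∈ Supp M` be a prime with `dim M_p ≥ 2` (codimension ≥ 2 in `Supp M`).  Then for
every prime `q ⊆ p` minimal in `Supp M`, the height of `p/q` in `R/q` is ≥ 2; i.e. a point
of codimension 1 in some irreducible component of `Supp M` has codimension 1 in `Supp M`. -/
theorem codim_one_purity_of_isS2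
    (R : Type u) [CommRing R] [IsNoetherianRing R]
    (M : Type u) [AddCommGroup M] [Module R M] [Module.Finite R M]
    (hS2 : IsS2 R M)
    (p : PrimeSpectrum R) (hp : p ∈ Module.support R M)
    (hdim : (2 : WithBot ℕ∞) ≤ moduleKrullDim (Localization.AtPrime p.asIdeal)
      (LocalizedModule p.asIdeal.primeCompl M))
    (q : PrimeSpectrum R) (hq : q ∈ Module.support R M) (hqp : q.asIdeal ≤ p.asIdeal)
    (hmin : ∀ r ∈ Module.support R M, r.asIdeal ≤ q.asIdeal → r.asIdeal = q.asIdeal) :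
    2 ≤ Order.height
      (⟨Ideal.map (Ideal.Quotient.mk q.asIdeal) p.asIdeal,
        Ideal.map_isPrime_of_surjective Ideal.Quotient.mk_surjective
          (by rw [Ideal.mk_ker]; exact hqp)⟩ : PrimeSpectrum (R ⧸ q.asIdeal)) := by
  let S := Localization.AtPrime p.asIdeal
  have hq_under : (q.asIdeal.map (algebraMap R S)).comap (algebraMap R S) = q.asIdeal :=
    IsLocalization.under_map_of_isPrime_disjoint p.asIdeal.primeCompl S q.2
      (Set.disjoint_left.mpr fun _ hx hxq ↦ hx (hqp hxq))
  have hQ : q.asIdeal.map (algebraMap R S) ∈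
      associatedPrimes S (LocalizedModule p.asIdeal.primeCompl M) :=
    Module.associatedPrimes.mem_associatedPrimes_of_comap_mem_associatedPrimes_of_isLocalizedModule
      p.asIdeal.primeCompl (LocalizedModule.mkLinearMap p.asIdeal.primeCompl M) _
      (by
        rw [hq_under]
        exact Module.associatedPrimes.minimalPrimes_annihilator_subset_associatedPrimes R M
          (mem_minimalPrimes_annihilator_of_minimal_support hq hmin))
  obtain ⟨rs, hlen, hmem, hreg⟩ := hS2 p hp 2 (le_min le_rfl (by exact_mod_cast hdim))
  obtain ⟨a, b, rfl⟩ := List.length_eq_two.mp hlen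
  obtain ⟨P, hP, hQP, hPm⟩ := exists_isPrime_between_of_isWeaklyRegular hQ
    (hmem a (by simp)) (hmem b (by simp)) hreg
  have hlt := (IsLocalization.orderEmbedding p.asIdeal.primeCompl S).strictMono
  have hqr : q.asIdeal < P.under R := hq_under ▸ hlt hQP
  have hrp : P.under R < (maximalIdeal S).under R := hlt hPm
  rw [IsLocalization.AtPrime.under_maximalIdeal S p.asIdeal] at hrp
  exact two_le_height_map_quotientMk_of_lt_of_lt hqr hrp _
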